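/- Convolution decomposition of the Poisson-subsampled Gaussian mechanism: let σ > 0, γ ∈ [0,1], m ≥ 0, x ∈ ℝ^m, and a ∈ ℝ. Then Mγ(x₁,…,x_m,a) equals the convolution ν_x ∗ ((1−γ)·N(0,σ²) + γ·N(a,σ²)), where ν_x := ∑_{S ⊆ {1,…,m}} γ^{|S|}(1−γ)^{m−|S|} · δ_{∑_{i∈S} x_i} is the law of the Poisson-subsampled sum of x, and ∗ denotes convolution of measures on ℝ (the pushforward of the independent product ν_x ⊗ ((1−γ)·N(0,σ²) + γ·N(a,σ²)) under addition). -/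

import Mathlib

/-!
Split the subsets of `Fin (m + 1)` according to whether they contain the new last index. A subset
`S ⊆ Fin m` with weight `w_S` and sum `s_S` then contributes
`w_S (1 - γ) N(s_S, σ²) + w_S γ N(s_S + a, σ²)` to the left-hand side, and this is
`w_S · δ_{s_S} ∗ ((1 - γ) N(0, σ²) + γ N(a, σ²))` because convolving with a Dirac mass translates
a Gaussian.
-/

open MeasureTheory ProbabilityTheory
open scoped ENNReal NNReal

/-- The Poisson-subsampled Gaussian mechanism:
`Mγ(x) = ∑_{S ⊆ [m]} γ^{|S|} (1−γ)^{m−|S|} · N(∑_{i∈S} x_i, σ²)`. -/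
noncomputable def poissonGauss (σ γ : ℝ) {m : ℕ} (x : Fin m → ℝ) : Measure ℝ :=
  ∑ S : Finset (Fin m),
    ENNReal.ofReal (γ ^ S.card * (1 - γ) ^ (m - S.card)) •
      gaussianReal (∑ i ∈ S, x i) ⟨σ ^ 2, sq_nonneg σ⟩

/-- The law of the Poisson-subsampled sum of the tuple `x`:
`ν_x = ∑_{S ⊆ [m]} γ^{|S|} (1−γ)^{m−|S|} · δ_{∑_{i∈S} x_i}`. -/
noncomputable def poissonSumLaw (γ : ℝ) {m : ℕ} (x : Fin m → ℝ) : Measure ℝ :=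
  ∑ S : Finset (Fin m),
    ENNReal.ofReal (γ ^ S.card * (1 - γ) ^ (m - S.card)) •
      Measure.dirac (∑ i ∈ S, x i)

theorem Finset.powerset_map {α β : Type*} (f : α ↪ β) (s : Finset α) :
    (s.map f).powerset = s.powerset.map (Finset.mapEmbedding f).toEmbedding := by
  ext t
  simp [Finset.subset_map_iff, eq_comm]

theorem Fin.sum_finset_succ {M : Type*} [AddCommMonoid M] {m : ℕ}
    (f : Finset (Fin (m + 1)) → M) :
    ∑ T, f T = ∑ S : Finset (Fin m),
      (f (S.map Fin.castSuccEmb) + f (insert (Fin.last m) (S.map Fin.castSuccEmb))) := by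
  rw [← Finset.powerset_univ, Fin.univ_castSuccEmb, Finset.cons_eq_insert,
    Finset.sum_powerset_insert (by simp), Finset.powerset_map, Finset.sum_map, Finset.sum_map,
    Finset.powerset_univ, ← Finset.sum_add_distrib]
  rfl

theorem MeasureTheory.Measure.finsetSum_conv {M ι : Type*} [AddMonoid M] [MeasurableSpace M]
    [MeasurableAdd₂ M] (s : Finset ι) (μ : ι → Measure M) (ν : Measure M) [SFinite ν] :
    (∑ i ∈ s, μ i) ∗ ν = ∑ i ∈ s, μ i ∗ ν := by
  simp only [Measure.conv, ← Measure.sum_coe_finset, Measure.prod_sum_left]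
  exact Measure.map_sum measurable_add.aemeasurable

theorem dirac_conv_gaussianReal (x μ : ℝ) (v : ℝ≥0) :
    Measure.dirac x ∗ gaussianReal μ v = gaussianReal (μ + x) v := by
  rw [Measure.dirac_conv, gaussianReal_map_const_add]

theorem ENNReal.ofReal_pow_mul_one_sub_pow {γ : ℝ} (hγ0 : 0 ≤ γ) (hγ1 : γ ≤ 1) (k j : ℕ) :
    ENNReal.ofReal (γ ^ k * (1 - γ) ^ j) = ENNReal.ofReal γ ^ k * ENNReal.ofReal (1 - γ) ^ j := by
  rw [ENNReal.ofReal_mul (by positivity), ENNReal.ofReal_pow hγ0,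
    ENNReal.ofReal_pow (sub_nonneg.2 hγ1)]

theorem poissonGauss_snoc_eq_conv_general (σ γ : ℝ) (hγ0 : 0 ≤ γ) (hγ1 : γ ≤ 1)
    (m : ℕ) (x : Fin m → ℝ) (a : ℝ) :
    poissonGauss σ γ (Fin.snoc x a) =
      Measure.conv (poissonSumLaw γ x)
        (ENNReal.ofReal (1 - γ) • gaussianReal 0 ⟨σ ^ 2, sq_nonneg σ⟩ +
          ENNReal.ofReal γ • gaussianReal a ⟨σ ^ 2, sq_nonneg σ⟩) := by
  -- The variance `⟨σ ^ 2, _⟩` elaborates at type `{r // 0 ≤ r}`, where no `SFinite` instance for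
  -- Gaussians is found; restating it at type `ℝ≥0` makes `Measure.finsetSum_conv` applicable.
  set v : ℝ≥0 := ⟨σ ^ 2, sq_nonneg σ⟩
  have sum_snoc (S : Finset (Fin m)) :
      ∑ i ∈ S.map Fin.castSuccEmb, (Fin.snoc x a : Fin (m + 1) → ℝ) i = ∑ i ∈ S, x i := by
    simp [Finset.sum_map]
  have card_compl (S : Finset (Fin m)) : m + 1 - S.card = m - S.card + 1 := by
    have := S.card_le_univ.trans_eq (Fintype.card_fin m)
    omega
  simp only [poissonGauss, poissonSumLaw, Fin.sum_finset_succ, Measure.finsetSum_conv,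
    Measure.conv_smul_left, Measure.conv_add, Measure.conv_smul_right, dirac_conv_gaussianReal,
    zero_add, ENNReal.ofReal_pow_mul_one_sub_pow hγ0 hγ1, smul_smul]
  refine Finset.sum_congr rfl fun S _ => ?_
  rw [Finset.sum_insert (by simp), Finset.card_insert_of_notMem (by simp), Finset.card_map,
    sum_snoc, card_compl, Nat.add_sub_add_right, Fin.snoc_last, add_comm a]
  congr 2 <;> ring

/-- Convolution decomposition of the Poisson-subsampled Gaussian mechanism:
`Mγ(x₁,…,x_m,a) = ν_x ∗ ((1−γ)·N(0,σ²) + γ·N(a,σ²))`. -/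
theorem poissonGauss_snoc_eq_conv (σ γ : ℝ) (hσ : 0 < σ) (hγ0 : 0 ≤ γ) (hγ1 : γ ≤ 1)
    (m : ℕ) (x : Fin m → ℝ) (a : ℝ) :
    poissonGauss σ γ (Fin.snoc x a) =
      Measure.conv (poissonSumLaw γ x)
        (ENNReal.ofReal (1 - γ) • gaussianReal 0 ⟨σ ^ 2, sq_nonneg σ⟩ +
          ENNReal.ofReal γ • gaussianReal a ⟨σ ^ 2, sq_nonneg σ⟩) :=
  poissonGauss_snoc_eq_conv_general σ γ hγ0 hγ1 m x a
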